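/- Let k be an algebraically closed field of characteristic zero, A ∈ k[[z]] of order n ≥ 2, and F ∈ k[[z]] of order nm with m ≥ 1. Then the equation F = X ∘ A has a solution X ∈ k[[z]] of order m if and only if G_A ⊆ G_F, where G_P denotes the group of order-1 series φ with P ∘ φ = P. -/

import Mathlib

open PowerSeries

/-- Composition (substitution) `comp A B = A ∘ B` of formal power series,
the standard coefficient formula, well-behaved when `B` has zero constant term. -/
noncomputable def comp {k : Type*} [Field k] (A B : PowerSeries k) : PowerSeries k :=
  PowerSeries.mk fun n =>
    ∑ i ∈ Finset.range (n + 1), (PowerSeries.coeff i A) * (PowerSeries.coeff n (B ^ i))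

/-- `iterComp φ j` is the `j`-fold compositional iterate `φ^{∘j}` (with `φ^{∘0} = z`). -/
noncomputable def iterComp {k : Type*} [Field k] (φ : PowerSeries k) : ℕ → PowerSeries k
  | 0 => PowerSeries.X
  | n + 1 => comp φ (iterComp φ n)

/-- Composition of a list of power series: `compList [A₁, …, A_r] = A₁ ∘ ⋯ ∘ A_r`. -/
noncomputable def compList {k : Type*} [Field k] : List (PowerSeries k) → PowerSeries k
  | [] => PowerSeries.X
  | a :: t => comp a (compList t)

/-!
Write `A = B ^ n` with `B` of order one: `k` is algebraically closed, and in characteristic zero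
a binomial series gives `n`-th roots of series with constant coefficient `1`. Conjugating by `B`
turns the homotheties `z ↦ ζ z`, `ζ ^ n = 1`, into elements of `G_A`; hence if `G_A ⊆ G_F`, the
series `G = F ∘ B⁻¹` is invariant under `z ↦ ζ z` for a primitive `n`-th root of unity `ζ`. So
only exponents divisible by `n` occur in `G`, that is `G = Y ∘ z ^ n`, and
`F = G ∘ B = Y ∘ B ^ n = Y ∘ A`.
-/

namespace PowerSeries

theorem order_eq_one_iff {R : Type*} [Semiring R] {f : R⟦X⟧} :
    f.order = 1 ↔ constantCoeff f = 0 ∧ coeff 1 f ≠ 0 := by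
  rw [← Nat.cast_one, order_eq_nat]
  simp only [Nat.lt_one_iff, forall_eq, coeff_zero_eq_constantCoeff_apply]
  exact and_comm

section Substitution

variable {R : Type*} [CommRing R]

theorem coeff_pow_eq_zero_of_lt {a : R⟦X⟧} (ha : constantCoeff a = 0) {n d : ℕ} (h : n < d) :
    coeff n (a ^ d) = 0 :=
  coeff_of_lt_order n ((Nat.cast_lt.mpr h).trans_le (le_order_pow_of_constantCoeff_eq_zero d ha))

theorem coeff_subst_eq_sum {a : R⟦X⟧} (ha : constantCoeff a = 0) (f : R⟦X⟧) (n : ℕ) :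
    coeff n (f.subst a) = ∑ i ∈ Finset.range (n + 1), coeff i f * coeff n (a ^ i) := by
  rw [coeff_subst' (HasSubst.of_constantCoeff_zero' ha)]
  refine finsum_eq_sum_of_support_subset _ fun d hd => ?_
  by_contra hdn
  simp only [Finset.coe_range, Set.mem_Iio, not_lt] at hdn
  exact hd (by simp only [coeff_pow_eq_zero_of_lt ha (show n < d by omega), smul_zero])

theorem constantCoeff_subst_of_constantCoeff_eq_zero {a : R⟦X⟧} (ha : constantCoeff a = 0)
    (f : R⟦X⟧) : constantCoeff (f.subst a) = constantCoeff f := by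
  simpa using coeff_subst_eq_sum ha f 0

theorem order_subst [IsDomain R] {a : R⟦X⟧} (ha : constantCoeff a = 0) (f : R⟦X⟧) :
    order (f.subst a : R⟦X⟧) = a.order * f.order := by
  have hS := HasSubst.of_constantCoeff_zero' ha
  rcases eq_or_ne f 0 with rfl | hf
  · rw [← coe_substAlgHom hS, map_zero, order_zero, ENat.mul_top]
    exact order_ne_zero_iff_constCoeff_eq_zero.mpr ha
  have hu : order (f.divXPowOrder.subst a : R⟦X⟧) = 0 := by
    by_contra h
    rw [← ne_eq, order_ne_zero_iff_constCoeff_eq_zero,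
      constantCoeff_subst_of_constantCoeff_eq_zero ha, constantCoeff_divXPowOrder_eq_zero_iff] at h
    exact hf h
  conv_lhs => rw [← X_pow_order_mul_divXPowOrder (f := f)]
  rw [subst_mul hS, subst_pow hS, subst_X hS, order_mul, order_pow, hu, add_zero,
    nsmul_eq_mul, coe_toNat_order hf, mul_comm]

end Substitution

section Roots

theorem binomialSeries_pow {R A : Type*} [CommRing R] [BinomialRing R] [CommRing A]
    [Algebra R A] (r : R) (n : ℕ) : binomialSeries A r ^ n = binomialSeries A (n * r) := by
  induction n with
  | zero => simp
  | succ n ih => rw [pow_succ, ih, ← binomialSeries_add, Nat.cast_succ, add_one_mul]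

theorem exists_pow_eq_of_constantCoeff_eq_one {R : Type*} [CommRing R] [Algebra ℚ R]
    {U : R⟦X⟧} (hU : constantCoeff U = 1) {n : ℕ} (hn : n ≠ 0) :
    ∃ V : R⟦X⟧, constantCoeff V = 1 ∧ V ^ n = U := by
  have hU₁ : constantCoeff (U - 1) = 0 := by rw [map_sub, hU, map_one, sub_self]
  have hS := HasSubst.of_constantCoeff_zero' hU₁
  refine ⟨(binomialSeries R (1 / n : ℚ)).subst (U - 1), ?_, ?_⟩
  · rw [constantCoeff_subst_of_constantCoeff_eq_zero hU₁, binomialSeries_constantCoeff]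
  · rw [← subst_pow hS, binomialSeries_pow, mul_one_div_cancel (Nat.cast_ne_zero.mpr hn),
      ← Nat.cast_one (R := ℚ), binomialSeries_nat, pow_one, ← coe_substAlgHom hS, map_add,
      map_one, coe_substAlgHom, subst_X hS, add_sub_cancel]

variable {k : Type*} [Field k] [IsAlgClosed k] [CharZero k]

theorem exists_pow_eq_of_constantCoeff_ne_zero {U : k⟦X⟧} (hU : constantCoeff U ≠ 0) {n : ℕ}
    (hn : n ≠ 0) : ∃ V : k⟦X⟧, constantCoeff V ≠ 0 ∧ V ^ n = U := by
  obtain ⟨c, hc⟩ := IsAlgClosed.exists_pow_nat_eq (constantCoeff U) (Nat.pos_of_ne_zero hn)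
  obtain ⟨V, hV₁, hVn⟩ := exists_pow_eq_of_constantCoeff_eq_one
    (U := C (constantCoeff U)⁻¹ * U) (by simp [inv_mul_cancel₀ hU]) hn
  have hc₀ : c ≠ 0 := by rintro rfl; exact hU (by rw [← hc, zero_pow hn])
  refine ⟨C c * V, by simp [hV₁, hc₀], ?_⟩
  rw [mul_pow, hVn, ← map_pow, hc, ← mul_assoc, ← map_mul, mul_inv_cancel₀ hU, map_one,
    one_mul]

theorem exists_pow_eq_of_order_eq {A : k⟦X⟧} {n : ℕ} (hn : n ≠ 0) (hA : A.order = n) :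
    ∃ B : k⟦X⟧, B.order = 1 ∧ B ^ n = A := by
  have hA₀ : A ≠ 0 := by rintro rfl; simp at hA
  obtain ⟨V, hV, hVn⟩ := exists_pow_eq_of_constantCoeff_ne_zero
    (constantCoeff_divXPowOrder_eq_zero_iff.not.mpr hA₀) hn
  refine ⟨X * V, ?_, ?_⟩
  · rw [order_mul, order_X, not_ne_iff.mp (order_ne_zero_iff_constCoeff_eq_zero.not.mpr hV),
      add_zero]
  · rw [mul_pow, hVn]
    conv_rhs => rw [← X_pow_order_mul_divXPowOrder (f := A), hA, ENat.toNat_natCast]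

end Roots

section Conjugation

variable {R : Type*} [CommRing R] {B : R⟦X⟧} (hB₁ : IsUnit (coeff 1 B))

/-- The conjugate `B⁻¹ ∘ (z ↦ ζ z) ∘ B` of a homothety by `B`. -/
noncomputable def conjSmul (ζ : R) : R⟦X⟧ := (B.substInvOfIsUnit hB₁).subst (ζ • B)

variable (hB : constantCoeff B = 0)

include hB

theorem constantCoeff_conjSmul (ζ : R) : constantCoeff (conjSmul hB₁ ζ) = 0 := by
  rw [conjSmul, constantCoeff_subst_of_constantCoeff_eq_zero (by simp [hB]),
    constantCoeff_substInvOfIsUnit]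

theorem HasSubst.conjSmul (ζ : R) : HasSubst (conjSmul hB₁ ζ) :=
  HasSubst.of_constantCoeff_zero' (constantCoeff_conjSmul hB₁ hB ζ)

theorem subst_conjSmul (ζ : R) : B.subst (conjSmul hB₁ ζ) = ζ • B := by
  have hζB : HasSubst (ζ • B) := (HasSubst.of_constantCoeff_zero' hB).smul' ζ
  rw [conjSmul, ← subst_comp_subst_apply (HasSubst.substInvOfIsUnit B hB₁) hζB,
    subst_substInvOfIsUnit_right B hB hB₁, subst_X hζB]

theorem pow_subst_conjSmul {ζ : R} {n : ℕ} (hζ : ζ ^ n = 1) :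
    (B ^ n).subst (conjSmul hB₁ ζ) = B ^ n := by
  rw [subst_pow (HasSubst.conjSmul hB₁ hB ζ), subst_conjSmul hB₁ hB, smul_pow, hζ, one_smul]

theorem conjSmul_subst_substInv (ζ : R) :
    (conjSmul hB₁ ζ).subst (B.substInvOfIsUnit hB₁) =
      rescale ζ (B.substInvOfIsUnit hB₁) := by
  have hinv := HasSubst.substInvOfIsUnit B hB₁
  rw [conjSmul, subst_comp_subst_apply ((HasSubst.of_constantCoeff_zero' hB).smul' ζ) hinv,
    subst_smul hinv, subst_substInvOfIsUnit_right B hB hB₁, rescale_eq_subst]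

theorem rescale_subst_substInv_eq {F : R⟦X⟧} {ζ : R} (hF : F.subst (conjSmul hB₁ ζ) = F) :
    rescale ζ (F.subst (B.substInvOfIsUnit hB₁)) = F.subst (B.substInvOfIsUnit hB₁) := by
  have hinv := HasSubst.substInvOfIsUnit B hB₁
  rw [rescale_eq_subst, subst_comp_subst_apply hinv (HasSubst.smul_X' ζ), ← rescale_eq_subst,
    ← conjSmul_subst_substInv hB₁ hB,
    ← subst_comp_subst_apply (HasSubst.conjSmul hB₁ hB ζ) hinv, hF]

end Conjugation

theorem order_conjSmul {k : Type*} [Field k] {B : k⟦X⟧} (hB : B.order = 1) {ζ : k}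
    (hζ : ζ ≠ 0) : (conjSmul (order_eq_one_iff.mp hB).2.isUnit ζ).order = 1 := by
  obtain ⟨hB₀, hB₁⟩ := order_eq_one_iff.mp hB
  have hζB : (ζ • B).order = 1 :=
    order_eq_one_iff.mpr ⟨by simp [hB₀], by rw [coeff_smul]; exact mul_ne_zero hζ hB₁⟩
  have hinv : (B.substInvOfIsUnit hB₁.isUnit).order = 1 :=
    order_eq_one_iff.mpr ⟨constantCoeff_substInvOfIsUnit _ _, by simpa using hB₁⟩
  rw [conjSmul, order_subst (order_eq_one_iff.mp hζB).1, hζB, hinv, one_mul]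

theorem exists_subst_X_pow_eq_of_rescale_eq {R : Type*} [CommRing R] [IsDomain R] {ζ : R}
    {n : ℕ} (hζ : IsPrimitiveRoot ζ n) (hn : n ≠ 0) {f : R⟦X⟧} (hf : rescale ζ f = f) :
    ∃ g : R⟦X⟧, g.subst (X ^ n) = f := by
  refine ⟨mk fun i => coeff (n * i) f, ?_⟩
  ext j
  rw [coeff_subst_X_pow hn, coeff_mk, Algebra.algebraMap_self, RingHom.id_apply]
  split_ifs with hj
  · rw [Nat.mul_div_cancel' hj]
  · have hζj : ζ ^ j - 1 ≠ 0 := sub_ne_zero.mpr ((hζ.pow_eq_one_iff_dvd j).not.mpr hj)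
    have hfj := congrArg (coeff j) hf
    rw [coeff_rescale] at hfj
    exact ((mul_eq_zero.mp (by linear_combination hfj)).resolve_left hζj).symm

theorem exists_subst_eq_of_forall_subst_eq {k : Type*} [Field k] [IsAlgClosed k] [CharZero k]
    {n : ℕ} (hn : n ≠ 0) {A F : k⟦X⟧} (hA : A.order = n)
    (h : ∀ φ : k⟦X⟧, φ.order = 1 → A.subst φ = A → F.subst φ = F) :
    ∃ Y : k⟦X⟧, F = Y.subst A := by
  obtain ⟨B, hB, rfl⟩ := exists_pow_eq_of_order_eq hn hA
  obtain ⟨hB₀, hB₁⟩ := order_eq_one_iff.mp hB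
  have : NeZero (n : k) := ⟨Nat.cast_ne_zero.mpr hn⟩
  obtain ⟨ζ, hζ⟩ := HasEnoughRootsOfUnity.exists_primitiveRoot k n
  have hG := rescale_subst_substInv_eq hB₁.isUnit hB₀ <|
    h _ (order_conjSmul hB (hζ.ne_zero hn)) (pow_subst_conjSmul hB₁.isUnit hB₀ hζ.pow_eq_one)
  obtain ⟨Y, hY⟩ := exists_subst_X_pow_eq_of_rescale_eq hζ hn hG
  have hS := HasSubst.of_constantCoeff_zero' hB₀
  refine ⟨Y, ?_⟩
  calc F = subst B (subst (B.substInvOfIsUnit hB₁.isUnit) F) := by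
        rw [subst_comp_subst_apply (HasSubst.substInvOfIsUnit B _) hS,
          subst_substInvOfIsUnit_left B hB₀, X_subst]
    _ = Y.subst (B ^ n) := by
        rw [← hY, subst_comp_subst_apply (HasSubst.X_pow hn) hS, subst_pow hS, subst_X hS]

end PowerSeries

theorem comp_eq_subst {k : Type*} [Field k] (A : PowerSeries k) {B : PowerSeries k}
    (hB : constantCoeff B = 0) : comp A B = A.subst B := by
  ext n
  rw [coeff_subst_eq_sum hB, comp, coeff_mk]

theorem stmt10_general {k : Type*} [Field k] [IsAlgClosed k] [CharZero k]
    {n m : ℕ} (hn : 2 ≤ n)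
    (A F : PowerSeries k) (hA : A.order = (n : ℕ∞)) (hF : F.order = ((n * m : ℕ) : ℕ∞)) :
    (∃ Xs : PowerSeries k, Xs.order = (m : ℕ∞) ∧ F = comp Xs A) ↔
      ∀ φ : PowerSeries k, φ.order = 1 → comp A φ = A → comp F φ = F := by
  have hn₀ : n ≠ 0 := by omega
  have hA₀ : constantCoeff A = 0 :=
    order_ne_zero_iff_constCoeff_eq_zero.mp (by rw [hA]; exact_mod_cast hn₀)
  have hcomp {φ : PowerSeries k} (hφ : φ.order = 1) (P : PowerSeries k) :
      comp P φ = P.subst φ :=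
    comp_eq_subst P (order_eq_one_iff.mp hφ).1
  constructor
  · rintro ⟨Y, -, rfl⟩ φ hφ hAφ
    rw [hcomp hφ] at hAφ ⊢
    rw [comp_eq_subst Y hA₀, subst_comp_subst_apply (HasSubst.of_constantCoeff_zero' hA₀)
      (HasSubst.of_constantCoeff_zero' (order_eq_one_iff.mp hφ).1), hAφ]
  · intro h
    obtain ⟨Y, rfl⟩ := exists_subst_eq_of_forall_subst_eq hn₀ hA fun φ hφ hAφ => by
      simpa only [hcomp hφ] using h φ hφ (by rwa [hcomp hφ])
    refine ⟨Y, ?_, (comp_eq_subst Y hA₀).symm⟩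
    rw [order_subst hA₀, hA, Nat.cast_mul] at hF
    exact (ENat.mul_right_strictMono (by exact_mod_cast hn₀) (ENat.natCast_ne_top n)).injective hF

theorem stmt10 {k : Type*} [Field k] [IsAlgClosed k] [CharZero k]
    {n m : ℕ} (hn : 2 ≤ n) (hm : 1 ≤ m)
    (A F : PowerSeries k) (hA : A.order = (n : ℕ∞)) (hF : F.order = ((n * m : ℕ) : ℕ∞)) :
    (∃ Xs : PowerSeries k, Xs.order = (m : ℕ∞) ∧ F = comp Xs A) ↔
      ∀ φ : PowerSeries k, φ.order = 1 → comp A φ = A → comp F φ = F :=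
  stmt10_general hn A F hA hF
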